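/- Let H be a real vector space, a : H × H → ℝ a symmetric positive semidefinite bilinear form, ‖v‖_a := √(a(v,v)), ℓ : H → ℝ a linear functional, K_h ⊆ H, and let ȳ_h ∈ K_h satisfy the discrete variational inequality a(ȳ_h, y − ȳ_h) ≥ ℓ(y − ȳ_h) for all y ∈ K_h. Let ȳ ∈ H, h > 0, α ∈ ℝ, and C₁, C₂ ≥ 0, and suppose there exists y* ∈ K_h such that (i) ‖ȳ − y*‖_a ≤ C₁·h^α and (ii) a(ȳ, y* − ȳ_h) − ℓ(y* − ȳ_h) ≤ C₂·( h^{2α} + h^α·‖ȳ − ȳ_h‖_a ). Then ‖ȳ − ȳ_h‖_a ≤ (C₁ + C₂ + √C₂)·h^α. -/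

import Mathlib

/-!
Testing the discrete variational inequality with `y*` turns the energy error `e = ȳ - ȳ_h` into
`‖e‖_a² ≤ a(e, ȳ - y*) + a(ȳ, y* - ȳ_h) - ℓ(y* - ȳ_h)`. Cauchy–Schwarz bounds the first term by
`C₁ h^α ‖e‖_a`, hypothesis (ii) the second, so `N = ‖e‖_a` satisfies the quadratic inequality
`N² ≤ (C₁ + C₂) h^α N + (√C₂ h^α)²`, whence `N ≤ (C₁ + C₂ + √C₂) h^α`.
-/

namespace LinearMap.BilinForm

variable {R M : Type*} [CommRing R] [LinearOrder R] [IsStrictOrderedRing R]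
  [AddCommGroup M] [Module R M]

lemma apply_sub_self_le_of_variationalIneq (a : LinearMap.BilinForm R M) (ℓ : M →ₗ[R] R)
    {x y yh : M} (hvi : ℓ (y - yh) ≤ a yh (y - yh)) :
    a (x - yh) (x - yh) ≤ a (x - yh) (x - y) + (a x (y - yh) - ℓ (y - yh)) := by
  have hsplit : a (x - yh) (x - yh) = a (x - yh) (x - y) + a (x - yh) (y - yh) := by
    rw [← map_add, sub_add_sub_cancel]
  have hleft : a (x - yh) (y - yh) = a x (y - yh) - a yh (y - yh) := by
    rw [map_sub a x yh, LinearMap.sub_apply]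
  linarith

lemma apply_le_sqrt_mul_sqrt {E : Type*} [AddCommGroup E] [Module ℝ E]
    (a : LinearMap.BilinForm ℝ E) (hpsd : ∀ v, 0 ≤ a v v) (hsym : LinearMap.IsSymm a)
    (v w : E) :
    a v w ≤ √(a v v) * √(a w w) := by
  rw [← Real.sqrt_mul (hpsd v)]
  exact Real.le_sqrt_of_sq_le (a.apply_sq_le_of_symm hpsd hsym v w)

end LinearMap.BilinForm

lemma le_add_of_sq_le_mul_add_sq {N B D : ℝ} (hB : 0 ≤ B) (hD : 0 ≤ D)
    (hN : N ^ 2 ≤ B * N + D ^ 2) : N ≤ B + D := by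
  by_contra! hlt
  nlinarith [mul_le_mul_of_nonneg_left hlt.le hD]

theorem abstract_convergence_estimate_general
    {H : Type*} [AddCommGroup H] [Module ℝ H]
    (a : H →ₗ[ℝ] H →ₗ[ℝ] ℝ)
    (hsym : ∀ v w : H, a v w = a w v)
    (hpsd : ∀ v : H, 0 ≤ a v v)
    (ℓ : H →ₗ[ℝ] ℝ)
    (Kh : Set H) (ybarh : H)
    (hdvi : ∀ y ∈ Kh, ℓ (y - ybarh) ≤ a ybarh (y - ybarh))
    (ybar : H) (h α C₁ C₂ : ℝ) (hh : 0 < h) (hC₁ : 0 ≤ C₁) (hC₂ : 0 ≤ C₂)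
    (hex : ∃ ystar ∈ Kh,
      Real.sqrt (a (ybar - ystar) (ybar - ystar)) ≤ C₁ * h ^ α ∧
      a ybar (ystar - ybarh) - ℓ (ystar - ybarh) ≤
        C₂ * (h ^ (2 * α) +
          h ^ α * Real.sqrt (a (ybar - ybarh) (ybar - ybarh)))) :
    Real.sqrt (a (ybar - ybarh) (ybar - ybarh)) ≤
      (C₁ + C₂ + Real.sqrt C₂) * h ^ α := by
  obtain ⟨ystar, hystar, hinterp, hconsist⟩ := hex
  set N := √(a (ybar - ybarh) (ybar - ybarh))
  have hN : N ^ 2 = a (ybar - ybarh) (ybar - ybarh) := Real.sq_sqrt (hpsd _)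
  have hh2a : h ^ (2 * α) = (h ^ α) ^ 2 := by
    rw [mul_comm, Real.rpow_mul hh.le, Real.rpow_two]
  have hCS : a (ybar - ybarh) (ybar - ystar) ≤ N * (C₁ * h ^ α) :=
    (LinearMap.BilinForm.apply_le_sqrt_mul_sqrt a hpsd ⟨fun v w => hsym v w⟩ _ _).trans
      (mul_le_mul_of_nonneg_left hinterp (Real.sqrt_nonneg _))
  have hquad : N ^ 2 ≤ (C₁ + C₂) * h ^ α * N + (√C₂ * h ^ α) ^ 2 := by
    have hvi := LinearMap.BilinForm.apply_sub_self_le_of_variationalIneq a ℓ (x := ybar)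
      (hdvi ystar hystar)
    rw [mul_pow, Real.sq_sqrt hC₂, ← hh2a]
    linarith
  have := le_add_of_sq_le_mul_add_sq (by positivity) (by positivity) hquad
  linarith

/-- Abstract skeleton of the convergence theorem: if `ȳ_h ∈ K_h` solves the discrete
variational inequality, and there is `y* ∈ K_h` with `‖ȳ − y*‖_a ≤ C₁ h^α` and
`a(ȳ, y* − ȳ_h) − ℓ(y* − ȳ_h) ≤ C₂ (h^{2α} + h^α ‖ȳ − ȳ_h‖_a)`, then
`‖ȳ − ȳ_h‖_a ≤ (C₁ + C₂ + √C₂) h^α`, where `‖v‖_a = √(a(v,v))`. -/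
theorem abstract_convergence_estimate
    {H : Type*} [AddCommGroup H] [Module ℝ H]
    (a : H →ₗ[ℝ] H →ₗ[ℝ] ℝ)
    (hsym : ∀ v w : H, a v w = a w v)
    (hpsd : ∀ v : H, 0 ≤ a v v)
    (ℓ : H →ₗ[ℝ] ℝ)
    (Kh : Set H) (ybarh : H) (hybarh : ybarh ∈ Kh)
    (hdvi : ∀ y ∈ Kh, ℓ (y - ybarh) ≤ a ybarh (y - ybarh))
    (ybar : H) (h α C₁ C₂ : ℝ) (hh : 0 < h) (hC₁ : 0 ≤ C₁) (hC₂ : 0 ≤ C₂)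
    (hex : ∃ ystar ∈ Kh,
      Real.sqrt (a (ybar - ystar) (ybar - ystar)) ≤ C₁ * h ^ α ∧
      a ybar (ystar - ybarh) - ℓ (ystar - ybarh) ≤
        C₂ * (h ^ (2 * α) +
          h ^ α * Real.sqrt (a (ybar - ybarh) (ybar - ybarh)))) :
    Real.sqrt (a (ybar - ybarh) (ybar - ybarh)) ≤
      (C₁ + C₂ + Real.sqrt C₂) * h ^ α :=
  abstract_convergence_estimate_general a hsym hpsd ℓ Kh ybarh hdvi ybar h α C₁ C₂ hh hC₁ hC₂ hex
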